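/- arXiv:2502.14855 — 3 statements merged into one kernel-verified Lean document; each statement's English description precedes it below -/
import Mathlib

section
/- Let M ≥ 1, θ : Fin M → ℝ, let q : Fin M → ℝ be a probability vector, let r : Fin M → ℝ satisfy 0 ≤ r a ≤ 1 for all a, and assume r̄ := ∑_a q a · r a ∈ (0,1). Define F(t) = ∑_a q a · ℓ(σ(t − θ a), r a). Then F has a unique global minimizer t₀ ∈ ℝ, and a point t ∈ ℝ is a global minimizer of F if and only if ∑_a q a · σ(t − θ a) = r̄. -/
/-- The logistic sigmoid `σ(t) = 1 / (1 + exp (-t))`. -/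
noncomputable def sigmoid (t : ℝ) : ℝ := 1 / (1 + Real.exp (-t))

/-- Binary cross-entropy loss `ℓ(p, y) = -(y log p + (1 - y) log (1 - p))`. -/
noncomputable def bce (p y : ℝ) : ℝ := -(y * Real.log p + (1 - y) * Real.log (1 - p))

/-- A probability vector on `Fin M`. -/
def IsProbVec {M : ℕ} (q : Fin M → ℝ) : Prop := (∀ a, 0 ≤ q a) ∧ ∑ a, q a = 1

/-!
Since `log σ(x) = -log (1 + e^{-x})` and `log (1 - σ(x)) = -x - log (1 + e^{-x})`, the loss
`ℓ(σ(x), y) = log (1 + e^{-x}) + (1 - y) x` has derivative `σ(x) - y`. Hence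
`F'(t) = G(t) - r̄` with `G(t) = ∑ₐ qₐ σ(t - θₐ)`, which increases from `0` to `1`, strictly
because some `qₐ` is positive.
So `F` is convex, its global minimizers are exactly the zeros of `F'`, and by the intermediate
value theorem and strict monotonicity of `G` there is exactly one.
-/

open Filter Topology Set

lemma isMinOn_univ_iff_of_hasDerivAt_of_monotone {f f' : ℝ → ℝ}
    (hf : ∀ x, HasDerivAt f (f' x) x) (hf' : Monotone f') (t : ℝ) :
    IsMinOn f univ t ↔ f' t = 0 := by
  have hderiv : ∀ x, deriv f x = f' x := fun x => (hf x).deriv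
  have hdiff : Differentiable ℝ f := fun x => (hf x).differentiableAt
  refine ⟨fun h => (h.isLocalMin univ_mem).hasDerivAt_eq_zero (hf t), fun h => ?_⟩
  refine isMinOn_univ_of_deriv (hf t).continuousAt hdiff.differentiableOn hdiff.differentiableOn
    (fun x hx => ?_) (fun x hx => ?_) <;> rw [hderiv, ← h] <;> exact hf' (le_of_lt hx)

lemma sigmoid_eq_real_sigmoid : sigmoid = Real.sigmoid :=
  funext fun _ => one_div _

lemma bce_sigmoid (x y : ℝ) :
    bce (sigmoid x) y = Real.log (1 + Real.exp (-x)) + (1 - y) * x := by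
  have hpos : 0 < 1 + Real.exp (-x) := by positivity
  have hsub : 1 - sigmoid x = Real.exp (-x) / (1 + Real.exp (-x)) := by
    unfold sigmoid; field_simp; ring
  rw [bce, hsub, sigmoid_eq_real_sigmoid, Real.sigmoid_def, Real.log_inv,
    Real.log_div (Real.exp_ne_zero _) hpos.ne', Real.log_exp]
  ring

lemma hasDerivAt_bce_sigmoid (y x : ℝ) :
    HasDerivAt (fun x => bce (sigmoid x) y) (sigmoid x - y) x := by
  have hpos : 0 < 1 + Real.exp (-x) := by positivity
  simp only [bce_sigmoid]
  refine ((((hasDerivAt_neg' x).exp.const_add 1).log hpos.ne').fun_add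
    ((hasDerivAt_id' x).const_mul (1 - y))).congr_deriv ?_
  rw [sigmoid_eq_real_sigmoid, Real.sigmoid_def]
  field_simp
  ring

section Mixture

variable {ι : Type*} [Fintype ι] (θ q : ι → ℝ)

lemma hasDerivAt_sum_mul_bce_sigmoid_sub (r : ι → ℝ) (t : ℝ) :
    HasDerivAt (fun t => ∑ a, q a * bce (sigmoid (t - θ a)) (r a))
      (∑ a, q a * sigmoid (t - θ a) - ∑ a, q a * r a) t := by
  rw [← Finset.sum_sub_distrib]
  simp only [← mul_sub]
  exact HasDerivAt.fun_sum fun a _ =>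
    ((hasDerivAt_bce_sigmoid (r a) (t - θ a)).comp_sub_const t (θ a)).const_mul (q a)

variable {q}

lemma strictMono_sum_mul_sigmoid_sub (hq₀ : ∀ a, 0 ≤ q a) (hq₁ : ∑ a, q a = 1) :
    StrictMono fun t => ∑ a, q a * sigmoid (t - θ a) := by
  obtain ⟨a₀, -, ha₀⟩ : ∃ a ∈ Finset.univ, (0 : ι → ℝ) a < q a :=
    Finset.exists_lt_of_sum_lt (by simp [hq₁])
  intro s t hst
  refine Finset.sum_lt_sum (fun a _ => ?_) ⟨a₀, Finset.mem_univ _, ?_⟩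
  all_goals rw [sigmoid_eq_real_sigmoid]
  · exact mul_le_mul_of_nonneg_left (Real.sigmoid_le (by linarith)) (hq₀ a)
  · exact mul_lt_mul_of_pos_left (Real.sigmoid_lt (by linarith)) ha₀

lemma tendsto_sum_mul_sigmoid_sub_atTop (hq₁ : ∑ a, q a = 1) :
    Tendsto (fun t => ∑ a, q a * sigmoid (t - θ a)) atTop (𝓝 1) := by
  simpa [hq₁, sub_eq_add_neg, sigmoid_eq_real_sigmoid] using
    tendsto_finsetSum Finset.univ fun a _ => (Real.tendsto_sigmoid_atTop.comp
      (tendsto_atTop_add_const_right _ (-θ a) tendsto_id)).const_mul (q a)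

lemma tendsto_sum_mul_sigmoid_sub_atBot :
    Tendsto (fun t => ∑ a, q a * sigmoid (t - θ a)) atBot (𝓝 0) := by
  simpa [sub_eq_add_neg, sigmoid_eq_real_sigmoid] using
    tendsto_finsetSum Finset.univ fun a _ => (Real.tendsto_sigmoid_atBot.comp
      (tendsto_atBot_add_const_right _ (-θ a) tendsto_id)).const_mul (q a)

lemma exists_sum_mul_sigmoid_sub_eq (hq₁ : ∑ a, q a = 1) {c : ℝ} (hc : c ∈ Ioo 0 1) :
    ∃ t, ∑ a, q a * sigmoid (t - θ a) = c :=
  mem_range_of_exists_le_of_exists_ge (by rw [sigmoid_eq_real_sigmoid]; fun_prop)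
    ((tendsto_sum_mul_sigmoid_sub_atBot θ).eventually (eventually_le_nhds hc.1)).exists
    ((tendsto_sum_mul_sigmoid_sub_atTop θ hq₁).eventually (eventually_ge_nhds hc.2)).exists

end Mixture

theorem bt_objective_unique_minimizer_general {M : ℕ} (θ : Fin M → ℝ)
    (q : Fin M → ℝ) (hq : IsProbVec q) (r : Fin M → ℝ)
    (hbar : (∑ a, q a * r a) ∈ Set.Ioo (0 : ℝ) 1) :
    (∃! t₀ : ℝ, ∀ t : ℝ,
        ∑ a, q a * bce (sigmoid (t₀ - θ a)) (r a) ≤ ∑ a, q a * bce (sigmoid (t - θ a)) (r a)) ∧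
    (∀ t : ℝ,
        (∀ s : ℝ, ∑ a, q a * bce (sigmoid (t - θ a)) (r a)
            ≤ ∑ a, q a * bce (sigmoid (s - θ a)) (r a)) ↔
          ∑ a, q a * sigmoid (t - θ a) = ∑ a, q a * r a) := by
  have hG := strictMono_sum_mul_sigmoid_sub θ hq.1 hq.2
  have key : ∀ t : ℝ,
      (∀ s : ℝ, ∑ a, q a * bce (sigmoid (t - θ a)) (r a)
          ≤ ∑ a, q a * bce (sigmoid (s - θ a)) (r a)) ↔
        ∑ a, q a * sigmoid (t - θ a) = ∑ a, q a * r a := fun t =>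
    isMinOn_univ_iff.symm.trans <| (isMinOn_univ_iff_of_hasDerivAt_of_monotone
      (hasDerivAt_sum_mul_bce_sigmoid_sub θ q r)
      (fun _ _ hxy => sub_le_sub_right (hG.monotone hxy) _) t).trans sub_eq_zero
  obtain ⟨t₀, ht₀⟩ := exists_sum_mul_sigmoid_sub_eq θ hq.2 hbar
  refine ⟨⟨t₀, (key t₀).2 ht₀, fun t ht => hG.injective ?_⟩, key⟩
  exact ((key t).1 ht).trans ht₀.symm

/-- If `q` is a probability vector, `0 ≤ r a ≤ 1` for all `a`, and
`r̄ = ∑ a, q a * r a ∈ (0,1)`, then `F(t) = ∑ a, q a * ℓ(σ(t - θ a), r a)` has a unique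
global minimizer, and `t` is a global minimizer of `F` iff `∑ a, q a * σ(t - θ a) = r̄`. -/
theorem bt_objective_unique_minimizer {M : ℕ} (hM : 1 ≤ M) (θ : Fin M → ℝ)
    (q : Fin M → ℝ) (hq : IsProbVec q) (r : Fin M → ℝ) (hr : ∀ a, 0 ≤ r a ∧ r a ≤ 1)
    (hbar : (∑ a, q a * r a) ∈ Set.Ioo (0 : ℝ) 1) :
    (∃! t₀ : ℝ, ∀ t : ℝ,
        ∑ a, q a * bce (sigmoid (t₀ - θ a)) (r a) ≤ ∑ a, q a * bce (sigmoid (t - θ a)) (r a)) ∧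
    (∀ t : ℝ,
        (∀ s : ℝ, ∑ a, q a * bce (sigmoid (t - θ a)) (r a)
            ≤ ∑ a, q a * bce (sigmoid (s - θ a)) (r a)) ↔
          ∑ a, q a * sigmoid (t - θ a) = ∑ a, q a * r a) :=
  bt_objective_unique_minimizer_general θ q hq r hbar
end

section
/- For all real numbers a > 0, b > 0 and λ ≥ 1, a/(a + λ·b + 1) + b/(b + λ·a + 1) + 1/(1 + a + b) ≤ 1, with equality if and only if λ = 1. Consequently, in the grounded Rao–Kupper model the probability assigned to the outcome 'tie' — namely 1 − a/(a + λb + 1) − b/(b + λa + 1) − 1/(1 + a + b) — is nonnegative, so the four outcome probabilities form a genuine probability distribution. -/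
/-!
Putting the three fractions over a common denominator gives
`1 - (a/(a+λb+1) + b/(b+λa+1) + 1/(1+a+b)) = a b (λ-1) (2 + (a+b)(λ+1)) / D`
with `D` the (positive) product of the three denominators, so the deficit has the sign of `λ - 1`
and vanishes exactly when `λ = 1`.
-/

theorem one_sub_raoKupper_sum_eq {a b lam : ℝ} (hA : a + lam * b + 1 ≠ 0)
    (hB : b + lam * a + 1 ≠ 0) (hT : 1 + a + b ≠ 0) :
    1 - (a / (a + lam * b + 1) + b / (b + lam * a + 1) + 1 / (1 + a + b)) =
      a * b * (lam - 1) * (2 + (a + b) * (lam + 1)) /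
        ((a + lam * b + 1) * (b + lam * a + 1) * (1 + a + b)) := by
  have hAB := mul_ne_zero hA hB
  rw [div_add_div _ _ hA hB, div_add_div _ _ hAB hT, one_sub_div (mul_ne_zero hAB hT)]
  ring

theorem raoKupper_sum_le_one {a b lam : ℝ} (ha : 0 ≤ a) (hb : 0 ≤ b) (hlam : 1 ≤ lam) :
    a / (a + lam * b + 1) + b / (b + lam * a + 1) + 1 / (1 + a + b) ≤ 1 := by
  have hlam₀ : 0 ≤ lam := by linarith
  have hlam₁ : 0 ≤ lam - 1 := by linarith
  have hdeficit := one_sub_raoKupper_sum_eq (a := a) (b := b) (lam := lam)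
    (by positivity) (by positivity) (by positivity)
  have hdeficit_nonneg : 0 ≤ a * b * (lam - 1) * (2 + (a + b) * (lam + 1)) /
      ((a + lam * b + 1) * (b + lam * a + 1) * (1 + a + b)) := by positivity
  linarith

theorem raoKupper_sum_eq_one_iff {a b lam : ℝ} (ha : 0 < a) (hb : 0 < b) (hlam : 0 ≤ lam) :
    a / (a + lam * b + 1) + b / (b + lam * a + 1) + 1 / (1 + a + b) = 1 ↔ lam = 1 := by
  have hA : 0 < a + lam * b + 1 := by positivity
  have hB : 0 < b + lam * a + 1 := by positivity
  have hT : 0 < 1 + a + b := by positivity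
  have hfactor : 2 + (a + b) * (lam + 1) ≠ 0 := by positivity
  rw [eq_comm, ← sub_eq_zero, one_sub_raoKupper_sum_eq hA.ne' hB.ne' hT.ne',
    div_eq_zero_iff, or_iff_left (by positivity)]
  simp only [mul_eq_zero, ha.ne', hb.ne', hfactor, sub_eq_zero, false_or, or_false]

/-- For `a > 0`, `b > 0`, `λ ≥ 1`,
`a/(a + λb + 1) + b/(b + λa + 1) + 1/(1 + a + b) ≤ 1`, with equality iff `λ = 1`;
hence the grounded Rao–Kupper tie probability is nonnegative. -/
theorem groundedRaoKupper_tie_prob_nonneg (a b lam : ℝ) (ha : 0 < a) (hb : 0 < b)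
    (hlam : 1 ≤ lam) :
    a / (a + lam * b + 1) + b / (b + lam * a + 1) + 1 / (1 + a + b) ≤ 1 ∧
      (a / (a + lam * b + 1) + b / (b + lam * a + 1) + 1 / (1 + a + b) = 1 ↔ lam = 1) ∧
      0 ≤ 1 - a / (a + lam * b + 1) - b / (b + lam * a + 1) - 1 / (1 + a + b) := by
  have hle := raoKupper_sum_le_one ha.le hb.le hlam
  exact ⟨hle, raoKupper_sum_eq_one_iff ha hb (by linarith), by linarith⟩
end

section
/- Let M ≥ 1, θ, c : Fin M → ℝ, C ∈ ℝ, let q be a probability vector on Fin M, and let the feasible set S = {π : Fin M → ℝ | π is a probability vector and ∑_b π b · c b ≤ C} be nonempty. Define R(π) = ∑_b ∑_a π b · q a · σ(θ b − θ a) and let θ′(π) be the unique t with ∑_a q a · σ(t − θ a) = R(π). Then R attains a maximum R* over S, θ′ attains a maximum over S, and the maximum of θ′ over S equals the unique root t* ∈ ℝ of the equation ∑_a q a · σ(t* − θ a) = R*. -/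
open Finset

theorem sigmoid_strictMono : StrictMono sigmoid := fun s t hst => by
  unfold sigmoid
  gcongr

theorem IsProbVec.exists_pos {M : ℕ} {q : Fin M → ℝ} (hq : IsProbVec q) : ∃ a, 0 < q a := by
  by_contra! h
  have : ∑ a, q a ≤ 0 := sum_nonpos fun a _ => h a
  linarith [hq.2]

theorem StrictMono.sum_mul_comp_sub {M : ℕ} {f : ℝ → ℝ} (hf : StrictMono f)
    {q : Fin M → ℝ} (hq : IsProbVec q) (θ : Fin M → ℝ) :
    StrictMono fun t => ∑ a, q a * f (t - θ a) := by
  intro s t hst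
  obtain ⟨a₀, ha₀⟩ := hq.exists_pos
  refine sum_lt_sum (fun a _ => ?_) ⟨a₀, mem_univ a₀, ?_⟩
  · exact mul_le_mul_of_nonneg_left (hf (sub_lt_sub_right hst _)).le (hq.1 a)
  · exact mul_lt_mul_of_pos_left (hf (sub_lt_sub_right hst _)) ha₀

theorem isCompact_setOf_isProbVec_and_sum_mul_le {M : ℕ} (c : Fin M → ℝ) (C : ℝ) :
    IsCompact {π : Fin M → ℝ | IsProbVec π ∧ ∑ b, π b * c b ≤ C} := by
  have hcost : IsClosed {π : Fin M → ℝ | ∑ b, π b * c b ≤ C} :=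
    isClosed_le (by fun_prop) continuous_const
  exact (isCompact_stdSimplex ℝ (Fin M)).inter_right hcost

theorem algorithm_one_correctness_general {M : ℕ} (θ c : Fin M → ℝ) (C : ℝ)
    (q : Fin M → ℝ) (hq : IsProbVec q)
    (hS : ∃ π : Fin M → ℝ, IsProbVec π ∧ (∑ b, π b * c b) ≤ C)
    (θ' : (Fin M → ℝ) → ℝ)
    (hθ' : ∀ π : Fin M → ℝ, IsProbVec π →
        ∑ a, q a * sigmoid (θ' π - θ a) = ∑ b, ∑ a, π b * q a * sigmoid (θ b - θ a)) :
    ∃ πstar : Fin M → ℝ, IsProbVec πstar ∧ (∑ b, πstar b * c b) ≤ C ∧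
      (∀ π : Fin M → ℝ, IsProbVec π → (∑ b, π b * c b) ≤ C →
          ∑ b, ∑ a, π b * q a * sigmoid (θ b - θ a)
            ≤ ∑ b, ∑ a, πstar b * q a * sigmoid (θ b - θ a)) ∧
      (∀ π : Fin M → ℝ, IsProbVec π → (∑ b, π b * c b) ≤ C → θ' π ≤ θ' πstar) ∧
      (∀ t : ℝ,
          ∑ a, q a * sigmoid (t - θ a) = ∑ b, ∑ a, πstar b * q a * sigmoid (θ b - θ a) →
          t = θ' πstar) := by
  have hR : Continuous fun π : Fin M → ℝ => ∑ b, ∑ a, π b * q a * sigmoid (θ b - θ a) := by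
    fun_prop
  obtain ⟨πstar, ⟨hπstar, hcost⟩, hmax⟩ :=
    (isCompact_setOf_isProbVec_and_sum_mul_le c C).exists_isMaxOn hS hR.continuousOn
  have hG := sigmoid_strictMono.sum_mul_comp_sub hq θ
  refine ⟨πstar, hπstar, hcost, fun π hπ hπc => hmax ⟨hπ, hπc⟩, fun π hπ hπc => ?_,
    fun t ht => hG.injective ?_⟩
  · refine hG.le_iff_le.mp ?_
    simp only [hθ' π hπ, hθ' πstar hπstar]
    exact hmax ⟨hπ, hπc⟩
  · simp only [ht, hθ' πstar hπstar]

/-- **correctness of Algorithm 1.** Over the nonempty feasible set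
`S = {π | π a probability vector, ∑ b, π b * c b ≤ C}`, the win rate
`R(π) = ∑ b, ∑ a, π b * q a * σ(θ b - θ a)` attains a maximum at some `π* ∈ S`; this `π*`
also maximizes the Bradley–Terry coefficient `θ′` over `S` (so `θ′` attains its maximum),
and that maximal value `θ′ π*` is the unique root `t*` of `∑ a, q a * σ(t* - θ a) = R(π*)`,
where `R(π*) = R*` is the maximal win rate. -/
theorem algorithm_one_correctness {M : ℕ} (hM : 1 ≤ M) (θ c : Fin M → ℝ) (C : ℝ)
    (q : Fin M → ℝ) (hq : IsProbVec q)
    (hS : ∃ π : Fin M → ℝ, IsProbVec π ∧ (∑ b, π b * c b) ≤ C)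
    (θ' : (Fin M → ℝ) → ℝ)
    (hθ' : ∀ π : Fin M → ℝ, IsProbVec π →
        ∑ a, q a * sigmoid (θ' π - θ a) = ∑ b, ∑ a, π b * q a * sigmoid (θ b - θ a)) :
    ∃ πstar : Fin M → ℝ, IsProbVec πstar ∧ (∑ b, πstar b * c b) ≤ C ∧
      (∀ π : Fin M → ℝ, IsProbVec π → (∑ b, π b * c b) ≤ C →
          ∑ b, ∑ a, π b * q a * sigmoid (θ b - θ a)
            ≤ ∑ b, ∑ a, πstar b * q a * sigmoid (θ b - θ a)) ∧
      (∀ π : Fin M → ℝ, IsProbVec π → (∑ b, π b * c b) ≤ C → θ' π ≤ θ' πstar) ∧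
      (∀ t : ℝ,
          ∑ a, q a * sigmoid (t - θ a) = ∑ b, ∑ a, πstar b * q a * sigmoid (θ b - θ a) →
          t = θ' πstar) :=
  algorithm_one_correctness_general θ c C q hq hS θ' hθ'
end
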